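/- If Qₖ denotes the number of strong score sequences of length k, then Nₙ ≥ n·Qₙ for all n ≥ 1; more precisely, Nₙ = ∑ over score-sequence bridges B of length 2n of ℓ(B), where 2ℓ(B) is the length of the first irreducible part, and each strong score sequence contributes ℓ = n. -/

import Mathlib

/-- The partial sum `s₁ + ⋯ + s_k`. -/
def scorePartial (n : ℕ) (s : Fin n → ℕ) (k : ℕ) : ℕ :=
  ∑ i ∈ Finset.univ.filter (fun i : Fin n => (i : ℕ) < k), s i

/-- `s` is a score sequence of length `n`. -/
def IsScoreSeq (n : ℕ) (s : Fin n → ℕ) : Prop :=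
  Monotone s ∧ (∀ i, s i ≤ n - 1) ∧ (∑ i, s i) = n.choose 2 ∧
    ∀ k ≤ n, Nat.choose k 2 ≤ scorePartial n s k

/-- `s` is a strong score sequence. -/
def IsStrongScoreSeq (n : ℕ) (s : Fin n → ℕ) : Prop :=
  IsScoreSeq n s ∧ ∀ j, 0 < j → j < n → Nat.choose j 2 < scorePartial n s j

/-- `Q k`: the number of strong score sequences of length `k`. -/
noncomputable def Q (k : ℕ) : ℕ := Nat.card {s : Fin k → ℕ // IsStrongScoreSeq k s}

/-- `N n`: the number of `n`-element subsets of `{1,…,2n−1}` with sum divisible by `n`. -/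
noncomputable def N (n : ℕ) : ℕ :=
  Nat.card {D : Finset ℕ // D ⊆ Finset.Icc 1 (2 * n - 1) ∧ D.card = n ∧ (∑ d ∈ D, d) % n = 0}

/-- The finset of down-step sets of score-sequence bridges of length `2n`:
`n`-subsets `D` of `{1,…,2n}` with sawtooth area `−n² + ∑D = 0` and nonnegative
sub-bridge areas at all returns to zero. -/
def scoreBridges (n : ℕ) : Finset (Finset ℕ) :=
  ((Finset.Icc 1 (2 * n)).powersetCard n).filter
    (fun D => (∑ d ∈ D, d) = n ^ 2 ∧
      ∀ k ∈ Finset.Ioo 0 n, (D ∩ Finset.Icc 1 (2 * k)).card = k →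
        k ^ 2 ≤ ∑ d ∈ D ∩ Finset.Icc 1 (2 * k), d)

/-- `ℓ(B)`: half the length of the first irreducible part of the bridge with
down-step set `D`. -/
noncomputable def firstIrr (D : Finset ℕ) : ℕ :=
  sInf {k | 0 < k ∧ (D ∩ Finset.Icc 1 (2 * k)).card = k ∧
    (∑ d ∈ D ∩ Finset.Icc 1 (2 * k), d) = k ^ 2}



open Finset

namespace EGZaux

/-- periodic indicator of `E` with period `2n` (intended for `j ≥ 1`). -/
def per (n : ℕ) (E : Finset ℕ) (j : ℕ) : ℕ := if ((j - 1) % (2 * n)) + 1 ∈ E then 1 else 0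

/-- periodized counting function. -/
def cnt (n : ℕ) (E : Finset ℕ) (i : ℕ) : ℕ := ∑ j ∈ Finset.Icc 1 i, per n E j

/-- periodized weighted sum. -/
def wsum (n : ℕ) (E : Finset ℕ) (i : ℕ) : ℕ := ∑ j ∈ Finset.Icc 1 i, j * per n E j

/-- rotate a subset of `[1, 2n]` by `u`. -/
def rot (n u : ℕ) (E : Finset ℕ) : Finset ℕ :=
  E.image (fun e => if e + u ≤ 2 * n then e + u else e + u - 2 * n)

variable {n : ℕ} {E : Finset ℕ}

lemma per_add_period (hn : 1 ≤ n) (j : ℕ) (hj : 1 ≤ j) :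
    per n E (j + 2 * n) = per n E j := by
  unfold per
  have h1 : j + 2 * n - 1 = (j - 1) + 2 * n := by omega
  rw [h1, Nat.add_mod_right]

lemma cnt_succ (i : ℕ) : cnt n E (i + 1) = cnt n E i + per n E (i + 1) := by
  unfold cnt
  rw [← Finset.sum_Icc_succ_top (by omega : 1 ≤ i + 1)]

lemma wsum_succ (i : ℕ) : wsum n E (i + 1) = wsum n E i + (i + 1) * per n E (i + 1) := by
  unfold wsum
  rw [← Finset.sum_Icc_succ_top (by omega : 1 ≤ i + 1)]

lemma cnt_zero : cnt n E 0 = 0 := by simp [cnt]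

lemma wsum_zero : wsum n E 0 = 0 := by simp [wsum]

lemma per_eq_indicator (hn : 1 ≤ n) {j : ℕ} (h1 : 1 ≤ j) (h2 : j ≤ 2 * n) :
    per n E j = if j ∈ E then 1 else 0 := by
  unfold per
  have : (j - 1) % (2 * n) = j - 1 := Nat.mod_eq_of_lt (by omega)
  rw [this, show j - 1 + 1 = j by omega]

lemma cnt_period (hn : 1 ≤ n) (hE : E ⊆ Finset.Icc 1 (2 * n)) : cnt n E (2 * n) = E.card := by
  unfold cnt
  rw [Finset.sum_congr rfl (fun j hj => by
    rw [per_eq_indicator hn (Finset.mem_Icc.mp hj).1 (Finset.mem_Icc.mp hj).2])]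
  rw [Finset.sum_ite_mem]
  rw [Finset.inter_eq_right.mpr hE]
  simp

lemma wsum_period (hn : 1 ≤ n) (hE : E ⊆ Finset.Icc 1 (2 * n)) :
    wsum n E (2 * n) = ∑ e ∈ E, e := by
  unfold wsum
  rw [Finset.sum_congr rfl (fun j hj => by
    rw [per_eq_indicator hn (Finset.mem_Icc.mp hj).1 (Finset.mem_Icc.mp hj).2])]
  have : ∀ j ∈ Finset.Icc 1 (2*n), j * (if j ∈ E then 1 else 0) = if j ∈ E then j else 0 := by
    intro j _; split <;> simp
  rw [Finset.sum_congr rfl this, Finset.sum_ite_mem, Finset.inter_eq_right.mpr hE]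

lemma cnt_add_period (hn : 1 ≤ n) (hE : E ⊆ Finset.Icc 1 (2 * n)) (i : ℕ) :
    cnt n E (i + 2 * n) = cnt n E i + E.card := by
  induction i with
  | zero => simpa [cnt_zero] using cnt_period hn hE
  | succ i ih =>
      have h1 : i + 1 + 2 * n = (i + 2 * n) + 1 := by omega
      rw [h1, cnt_succ, ih, cnt_succ]
      rw [show i + 2 * n + 1 = (i + 1) + 2 * n by omega, per_add_period hn _ (by omega)]
      ring

lemma wsum_add_period (hn : 1 ≤ n) (hE : E ⊆ Finset.Icc 1 (2 * n)) (i : ℕ) :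
    wsum n E (i + 2 * n) = wsum n E i + (∑ e ∈ E, e) + 2 * n * cnt n E i := by
  induction i with
  | zero => simpa [wsum_zero, cnt_zero] using wsum_period hn hE
  | succ i ih =>
      have h1 : i + 1 + 2 * n = (i + 2 * n) + 1 := by omega
      rw [h1, wsum_succ, ih, wsum_succ, cnt_succ]
      rw [show i + 2 * n + 1 = (i + 1) + 2 * n by omega, per_add_period hn _ (by omega)]
      ring

lemma cnt_mono : Monotone (cnt n E) := by
  intro a b hab
  unfold cnt
  exact Finset.sum_le_sum_of_subset (Finset.Icc_subset_Icc_right hab)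


variable {n u : ℕ} {E : Finset ℕ}

lemma rot_subset (hE : E ⊆ Finset.Icc 1 (2 * n)) (hu : u ≤ 2 * n) :
    rot n u E ⊆ Finset.Icc 1 (2 * n) := by
  intro x hx
  simp only [rot, Finset.mem_image] at hx
  obtain ⟨e, he, rfl⟩ := hx
  have := Finset.mem_Icc.mp (hE he)
  simp only [Finset.mem_Icc]
  split <;> omega

/-- key membership lemma -/
lemma mem_rot (hn : 1 ≤ n) (hE : E ⊆ Finset.Icc 1 (2 * n)) (hu1 : 1 ≤ u) (hu2 : u ≤ 2 * n)
    {j : ℕ} (hj1 : 1 ≤ j) (hj2 : j ≤ 2 * n) :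
    j ∈ rot n u E ↔ per n E (2 * n - u + j) = 1 := by
  set p := 2 * n - u with hp
  have hkey : ((p + j - 1) % (2 * n)) + 1 = if p + j ≤ 2 * n then p + j else p + j - 2 * n := by
    split
    · rw [Nat.mod_eq_of_lt (by omega)]; omega
    · rw [show p + j - 1 = (p + j - 1 - 2*n) + 1 * (2*n) by omega, Nat.add_mul_mod_self_right,
        Nat.mod_eq_of_lt (by omega)]
      omega
  constructor
  · intro hmem
    simp only [rot, Finset.mem_image] at hmem
    obtain ⟨e, he, hfe⟩ := hmem
    have heb := Finset.mem_Icc.mp (hE he)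
    unfold per
    rw [hkey]
    split at hfe
    · -- j = e + u, p + j = 2n + e > 2n
      have : ¬ (p + j ≤ 2 * n) := by omega
      rw [if_neg this, show p + j - 2*n = e by omega, if_pos he]
    · -- j = e + u - 2n, p + j = e
      have : p + j ≤ 2 * n := by omega
      rw [if_pos this, show p + j = e by omega, if_pos he]
  · intro hper
    unfold per at hper
    rw [hkey] at hper
    by_cases hc : p + j ≤ 2 * n
    · rw [if_pos hc] at hper
      have he : p + j ∈ E := by by_contra h; rw [if_neg h] at hper; omega
      simp only [rot, Finset.mem_image]
      refine ⟨p + j, he, ?_⟩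
      have : ¬ (p + j + u ≤ 2 * n) := by omega
      rw [if_neg this]; omega
    · rw [if_neg hc] at hper
      have he : p + j - 2 * n ∈ E := by by_contra h; rw [if_neg h] at hper; omega
      simp only [rot, Finset.mem_image]
      refine ⟨p + j - 2 * n, he, ?_⟩
      have hb := Finset.mem_Icc.mp (hE he)
      have : p + j - 2 * n + u ≤ 2 * n := by omega
      rw [if_pos this]; omega

lemma rot_rot (hE : E ⊆ Finset.Icc 1 (2 * n)) {v : ℕ} (huv : u + v = 2 * n) :
    rot n v (rot n u E) = E := by
  unfold rot
  rw [Finset.image_image]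
  have : ∀ e ∈ E, (fun e => if e + v ≤ 2*n then e + v else e + v - 2*n)
      ((fun e => if e + u ≤ 2*n then e + u else e + u - 2*n) e) = e := by
    intro e he
    have hb := Finset.mem_Icc.mp (hE he)
    simp only
    split
    · split <;> omega
    · split <;> omega
  calc E.image _ = E.image id := Finset.image_congr (fun e he => this e he)
  _ = E := Finset.image_id

lemma rot_card (hE : E ⊆ Finset.Icc 1 (2 * n)) (hu : u ≤ 2 * n) :
    (rot n u E).card = E.card := by
  unfold rot
  apply Finset.card_image_of_injOn
  intro a ha b hb hab
  have h1 := Finset.mem_Icc.mp (hE ha)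
  have h2 := Finset.mem_Icc.mp (hE hb)
  simp only at hab
  split at hab <;> split at hab <;> omega

lemma rot_sum_mod (hn : 1 ≤ n) (hE : E ⊆ Finset.Icc 1 (2 * n)) (hu : u ≤ 2 * n)
    (hcard : E.card = n) :
    (∑ d ∈ rot n u E, d) % n = (∑ e ∈ E, e) % n := by
  unfold rot
  rw [Finset.sum_image (by
    intro a ha b hb hab
    have h1 := Finset.mem_Icc.mp (hE ha)
    have h2 := Finset.mem_Icc.mp (hE hb)
    simp only at hab
    split at hab <;> split at hab <;> omega)]
  have key : ∀ e ∈ E, (if e + u ≤ 2*n then e + u else e + u - 2*n) % n = (e + u) % n := by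
    intro e he
    have hb := Finset.mem_Icc.mp (hE he)
    split
    · rfl
    · conv_rhs => rw [show e + u = (e + u - 2*n) + n * 2 by omega]
      rw [Nat.add_mul_mod_self_left]
  rw [Finset.sum_nat_mod, Finset.sum_congr rfl key, ← Finset.sum_nat_mod]
  rw [Finset.sum_add_distrib, Finset.sum_const, hcard, smul_eq_mul,
    Nat.add_mul_mod_self_left]

section Window
variable {n u : ℕ} {E : Finset ℕ}

/-- window counting lemma -/
lemma window (hn : 1 ≤ n) (hE : E ⊆ Finset.Icc 1 (2 * n)) (hu1 : 1 ≤ u) (hu2 : u ≤ 2 * n)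
    {m : ℕ} (hm : m ≤ 2 * n) :
    ((rot n u E) ∩ Finset.Icc 1 m).card + cnt n E (2 * n - u) = cnt n E (2 * n - u + m) ∧
    (∑ x ∈ (rot n u E) ∩ Finset.Icc 1 m, x) + (2 * n - u) * ((rot n u E) ∩ Finset.Icc 1 m).card
      + wsum n E (2 * n - u) = wsum n E (2 * n - u + m) := by
  set p := 2 * n - u with hp
  induction m with
  | zero => simp
  | succ m ih =>
      obtain ⟨ih1, ih2⟩ := ih (by omega)
      have hIcc : Finset.Icc 1 (m + 1) = insert (m + 1) (Finset.Icc 1 m) := by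
        ext x
        simp only [Finset.mem_Icc, Finset.mem_insert]
        omega
      have hnotmem : m + 1 ∉ (rot n u E) ∩ Finset.Icc 1 m := by
        simp only [Finset.mem_inter, Finset.mem_Icc]; omega
      rw [show p + (m+1) = (p + m) + 1 by omega, cnt_succ, wsum_succ]
      by_cases hmem : m + 1 ∈ rot n u E
      · have hper : per n E (p + m + 1) = 1 := by
          rw [show p + m + 1 = p + (m+1) by omega]
          exact (mem_rot hn hE hu1 hu2 (by omega) (by omega)).mp hmem
        have hins : (rot n u E) ∩ Finset.Icc 1 (m+1) = insert (m+1) ((rot n u E) ∩ Finset.Icc 1 m) := by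
          rw [hIcc, Finset.inter_insert_of_mem hmem]
        rw [hins, Finset.card_insert_of_notMem hnotmem, Finset.sum_insert hnotmem, hper]
        constructor
        · omega
        · rw [← ih2]; ring
      · have hper : per n E (p + m + 1) = 0 := by
          have := (mem_rot hn hE hu1 hu2 (by omega : 1 ≤ m + 1) (by omega : m + 1 ≤ 2 * n)).not.mp hmem
          rw [← hp] at this
          rw [show p + m + 1 = p + (m+1) by omega]
          have h01 : per n E (p + (m+1)) = 0 ∨ per n E (p + (m+1)) = 1 := by
            unfold per; split <;> simp
          omega
        have hins : (rot n u E) ∩ Finset.Icc 1 (m+1) = (rot n u E) ∩ Finset.Icc 1 m := by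
          rw [hIcc, Finset.inter_insert_of_notMem hmem]
        rw [hins, hper]
        constructor
        · omega
        · rw [← ih2]; ring

end Window

section Level
variable {n u : ℕ} {E : Finset ℕ}

/-- `p` is a level point: the rotation starting at `p` is a bridge with correct total area. -/
def level (n : ℕ) (E : Finset ℕ) (p : ℕ) : Prop :=
  2 * n * cnt n E p + (∑ e ∈ E, e) = n * p + n ^ 2

/-- the comparison potential `W`. -/
def Wz (n : ℕ) (E : Finset ℕ) (p : ℕ) : ℤ := 4 * (wsum n E p : ℤ) - (p : ℤ) ^ 2

lemma level_add_period (hn : 1 ≤ n) (hE : E ⊆ Finset.Icc 1 (2 * n)) (hcard : E.card = n)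
    (x : ℕ) : level n E (x + 2 * n) ↔ level n E x := by
  unfold level
  rw [cnt_add_period hn hE, hcard]
  constructor <;> intro h <;> nlinarith [h]

lemma Wz_add_period (hn : 1 ≤ n) (hE : E ⊆ Finset.Icc 1 (2 * n)) (hcard : E.card = n)
    {x : ℕ} (hx : level n E x) : Wz n E (x + 2 * n) = Wz n E x := by
  unfold Wz
  rw [wsum_add_period hn hE]
  unfold level at hx
  have hx' : 2 * (n:ℤ) * cnt n E x + (∑ e ∈ E, e : ℕ) = n * x + n ^ 2 := by exact_mod_cast hx
  push_cast
  nlinarith [hx']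

/-- parity: two level points differ by an even amount -/
lemma level_even_diff (hn : 1 ≤ n) {x y : ℕ} (hxy : x ≤ y)
    (hx : level n E x) (hy : level n E y) :
    y - x = 2 * (cnt n E y - cnt n E x) ∧ cnt n E x ≤ cnt n E y := by
  unfold level at hx hy
  have hc : cnt n E x ≤ cnt n E y := cnt_mono hxy
  constructor
  · nlinarith [hx, hy, hc, Nat.sub_add_cancel hxy, Nat.sub_add_cancel hc]
  · exact hc

/-- Translation (a): total sum of the rotated set. -/
lemma sum_rot_eq (hn : 1 ≤ n) (hE : E ⊆ Finset.Icc 1 (2 * n)) (hcard : E.card = n)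
    (hu1 : 1 ≤ u) (hu2 : u ≤ 2 * n) :
    (∑ d ∈ rot n u E, d) + (2 * n - u) * n = (∑ e ∈ E, e) + 2 * n * cnt n E (2 * n - u) := by
  obtain ⟨h1, h2⟩ := window (E := E) (u := u) hn hE hu1 hu2 (le_refl (2 * n))
  rw [Finset.inter_eq_left.mpr (rot_subset hE hu2)] at h1 h2
  rw [cnt_add_period hn hE, hcard] at h1
  rw [wsum_add_period hn hE] at h2
  have hcardrot : (rot n u E).card = n := by rw [rot_card hE hu2, hcard]
  rw [hcardrot] at h2
  omega

lemma sum_rot_iff (hn : 1 ≤ n) (hE : E ⊆ Finset.Icc 1 (2 * n)) (hcard : E.card = n)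
    (hu1 : 1 ≤ u) (hu2 : u ≤ 2 * n) :
    (∑ d ∈ rot n u E, d) = n ^ 2 ↔ level n E (2 * n - u) := by
  have h := sum_rot_eq hn hE hcard hu1 hu2
  unfold level
  constructor <;> intro h' <;> [skip; skip] <;> nlinarith [h, h']

/-- Translation (b): the return condition. -/
lemma card_window_iff (hn : 1 ≤ n) (hE : E ⊆ Finset.Icc 1 (2 * n)) (hcard : E.card = n)
    (hu1 : 1 ≤ u) (hu2 : u ≤ 2 * n) {k : ℕ} (hk : k ≤ n) (hlev : level n E (2 * n - u)) :
    ((rot n u E) ∩ Finset.Icc 1 (2 * k)).card = k ↔ level n E (2 * n - u + 2 * k) := by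
  obtain ⟨h1, _⟩ := window (E := E) (u := u) hn hE hu1 hu2 (by omega : 2 * k ≤ 2 * n)
  unfold level at hlev ⊢
  constructor
  · intro h'
    rw [h'] at h1
    nlinarith [h1, hlev]
  · intro h'
    nlinarith [h1, hlev, h']

/-- Translation (c): the area condition at a return. -/
lemma sum_window_key (hn : 1 ≤ n) (hE : E ⊆ Finset.Icc 1 (2 * n)) (hcard : E.card = n)
    (hu1 : 1 ≤ u) (hu2 : u ≤ 2 * n) {k : ℕ} (hk : k ≤ n)
    (hret : ((rot n u E) ∩ Finset.Icc 1 (2 * k)).card = k) :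
    4 * (((∑ x ∈ (rot n u E) ∩ Finset.Icc 1 (2 * k), x : ℕ) : ℤ) - (k:ℤ)^2)
      = Wz n E (2 * n - u + 2 * k) - Wz n E (2 * n - u) := by
  obtain ⟨h1, h2⟩ := window (E := E) (u := u) hn hE hu1 hu2 (by omega : 2 * k ≤ 2 * n)
  rw [hret] at h2
  unfold Wz
  set p := 2 * n - u with hp
  have h2' : ((∑ x ∈ (rot n u E) ∩ Finset.Icc 1 (2*k), x : ℕ) : ℤ) + p * k + wsum n E p
      = wsum n E (p + 2 * k) := by exact_mod_cast h2
  push_cast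
  nlinarith [h2']

lemma sum_window_le_iff (hn : 1 ≤ n) (hE : E ⊆ Finset.Icc 1 (2 * n)) (hcard : E.card = n)
    (hu1 : 1 ≤ u) (hu2 : u ≤ 2 * n) {k : ℕ} (hk : k ≤ n)
    (hret : ((rot n u E) ∩ Finset.Icc 1 (2 * k)).card = k) :
    (k ^ 2 ≤ ∑ x ∈ (rot n u E) ∩ Finset.Icc 1 (2 * k), x)
      ↔ Wz n E (2 * n - u) ≤ Wz n E (2 * n - u + 2 * k) := by
  have key := sum_window_key hn hE hcard hu1 hu2 hk hret
  constructor
  · intro h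
    have h' : ((k:ℤ))^2 ≤ ((∑ x ∈ (rot n u E) ∩ Finset.Icc 1 (2*k), x : ℕ) : ℤ) := by
      exact_mod_cast h
    linarith
  · intro h
    have h' : ((k:ℤ))^2 ≤ ((∑ x ∈ (rot n u E) ∩ Finset.Icc 1 (2*k), x : ℕ) : ℤ) := by
      linarith
    exact_mod_cast h'

lemma sum_window_eq_iff (hn : 1 ≤ n) (hE : E ⊆ Finset.Icc 1 (2 * n)) (hcard : E.card = n)
    (hu1 : 1 ≤ u) (hu2 : u ≤ 2 * n) {k : ℕ} (hk : k ≤ n)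
    (hret : ((rot n u E) ∩ Finset.Icc 1 (2 * k)).card = k) :
    ((∑ x ∈ (rot n u E) ∩ Finset.Icc 1 (2 * k), x) = k ^ 2)
      ↔ Wz n E (2 * n - u + 2 * k) = Wz n E (2 * n - u) := by
  have key := sum_window_key hn hE hcard hu1 hu2 hk hret
  constructor
  · intro h
    have h' : ((∑ x ∈ (rot n u E) ∩ Finset.Icc 1 (2*k), x : ℕ) : ℤ) = ((k:ℤ))^2 := by
      exact_mod_cast h
    linarith
  · intro h
    have h' : ((∑ x ∈ (rot n u E) ∩ Finset.Icc 1 (2*k), x : ℕ) : ℤ) = ((k:ℤ))^2 := by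
      linarith
    exact_mod_cast h'

lemma bridge_iff (hn : 1 ≤ n) (hE : E ⊆ Finset.Icc 1 (2 * n)) (hcard : E.card = n)
    (hu1 : 1 ≤ u) (hu2 : u ≤ 2 * n) :
    rot n u E ∈ scoreBridges n ↔
      (level n E (2 * n - u) ∧ ∀ k, 0 < k → k < n → level n E (2 * n - u + 2 * k) →
        Wz n E (2 * n - u) ≤ Wz n E (2 * n - u + 2 * k)) := by
  rw [scoreBridges, Finset.mem_filter, Finset.mem_powersetCard]
  have hsub : rot n u E ⊆ Finset.Icc 1 (2 * n) := rot_subset hE hu2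
  have hcd : (rot n u E).card = n := by rw [rot_card hE hu2, hcard]
  constructor
  · rintro ⟨-, hsum, hcond⟩
    have hlev : level n E (2 * n - u) := (sum_rot_iff hn hE hcard hu1 hu2).mp hsum
    refine ⟨hlev, fun k hk0 hkn hlevk => ?_⟩
    have hret : ((rot n u E) ∩ Finset.Icc 1 (2 * k)).card = k :=
      (card_window_iff hn hE hcard hu1 hu2 (le_of_lt hkn) hlev).mpr hlevk
    have := hcond k (Finset.mem_Ioo.mpr ⟨hk0, hkn⟩) hret
    exact (sum_window_le_iff hn hE hcard hu1 hu2 (le_of_lt hkn) hret).mp this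
  · rintro ⟨hlev, hcond⟩
    refine ⟨⟨hsub, hcd⟩, (sum_rot_iff hn hE hcard hu1 hu2).mpr hlev, ?_⟩
    intro k hk hret
    obtain ⟨hk0, hkn⟩ := Finset.mem_Ioo.mp hk
    have hlevk := (card_window_iff hn hE hcard hu1 hu2 (le_of_lt hkn) hlev).mp hret
    exact (sum_window_le_iff hn hE hcard hu1 hu2 (le_of_lt hkn) hret).mpr
      (hcond k hk0 hkn hlevk)

lemma firstIrr_rot (hn : 1 ≤ n) (hE : E ⊆ Finset.Icc 1 (2 * n)) (hcard : E.card = n)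
    (hu1 : 1 ≤ u) (hu2 : u ≤ 2 * n) (hlev : level n E (2 * n - u)) :
    firstIrr (rot n u E) = sInf {k | 0 < k ∧ level n E (2 * n - u + 2 * k) ∧
      Wz n E (2 * n - u + 2 * k) = Wz n E (2 * n - u)} := by
  set D := rot n u E with hD
  set S1 := {k | 0 < k ∧ (D ∩ Finset.Icc 1 (2 * k)).card = k ∧
    (∑ d ∈ D ∩ Finset.Icc 1 (2 * k), d) = k ^ 2} with hS1
  set S2 := {k | 0 < k ∧ level n E (2 * n - u + 2 * k) ∧
    Wz n E (2 * n - u + 2 * k) = Wz n E (2 * n - u)} with hS2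
  have hsub : D ⊆ Finset.Icc 1 (2 * n) := rot_subset hE hu2
  have hcd : D.card = n := by rw [hD, rot_card hE hu2, hcard]
  have hDfull : D ∩ Finset.Icc 1 (2 * n) = D := Finset.inter_eq_left.mpr hsub
  have hnS1 : n ∈ S1 := by
    refine ⟨hn, ?_, ?_⟩
    · rw [show 2 * n = 2 * n by rfl, hDfull, hcd]
    · rw [hDfull]
      exact (sum_rot_iff hn hE hcard hu1 hu2).mpr hlev
  have hnS2 : n ∈ S2 := by
    refine ⟨hn, ?_, ?_⟩
    · rw [show 2 * n - u + 2 * n = (2 * n - u) + 2 * n by ring]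
      exact (level_add_period hn hE hcard _).mpr hlev
    · rw [show 2 * n - u + 2 * n = (2 * n - u) + 2 * n by ring]
      exact Wz_add_period hn hE hcard hlev
  have transfer : ∀ k, 0 < k → k ≤ n → (k ∈ S1 ↔ k ∈ S2) := by
    intro k hk0 hkn
    constructor
    · rintro ⟨-, hcd', hsum'⟩
      exact ⟨hk0, (card_window_iff hn hE hcard hu1 hu2 hkn hlev).mp hcd',
        (sum_window_eq_iff hn hE hcard hu1 hu2 hkn hcd').mp hsum'⟩
    · rintro ⟨-, hlevk, hWz⟩
      have hcd' := (card_window_iff hn hE hcard hu1 hu2 hkn hlev).mpr hlevk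
      exact ⟨hk0, hcd', (sum_window_eq_iff hn hE hcard hu1 hu2 hkn hcd').mpr hWz⟩
  have h1le : sInf S1 ≤ n := Nat.sInf_le hnS1
  have h2le : sInf S2 ≤ n := Nat.sInf_le hnS2
  have h1mem : sInf S1 ∈ S1 := Nat.sInf_mem ⟨n, hnS1⟩
  have h2mem : sInf S2 ∈ S2 := Nat.sInf_mem ⟨n, hnS2⟩
  have e1 : firstIrr D = sInf S1 := rfl
  rw [e1]
  apply le_antisymm
  · exact Nat.sInf_le ((transfer _ h2mem.1 h2le).mpr h2mem)
  · exact Nat.sInf_le ((transfer _ h1mem.1 h1le).mp h1mem)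

end Level

section IVT
variable {n : ℕ} {E : Finset ℕ}

/-- the (integer) defect function: `A p = 0` iff `p` is a level point. -/
def Az (n : ℕ) (E : Finset ℕ) (p : ℕ) : ℤ :=
  (n : ℤ) * p + (n : ℤ) ^ 2 - (2 * n * cnt n E p + (∑ e ∈ E, e : ℕ))

lemma level_iff_Az {p : ℕ} : level n E p ↔ Az n E p = 0 := by
  unfold level Az
  constructor
  · intro h
    have h' := congrArg (fun x : ℕ => (x : ℤ)) h
    push_cast at h' ⊢
    linarith
  · intro h
    have h' : ((2 * n * cnt n E p + (∑ e ∈ E, e) : ℕ) : ℤ) = ((n * p + n ^ 2 : ℕ) : ℤ) := by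
      push_cast at h ⊢
      linarith
    exact_mod_cast h'

lemma Az_succ (p : ℕ) : Az n E (p + 1) = Az n E p + n - 2 * n * per n E (p + 1) := by
  unfold Az
  rw [cnt_succ]
  push_cast
  ring

lemma per01 (j : ℕ) : per n E j = 0 ∨ per n E j = 1 := by
  unfold per; split <;> simp

lemma dvd_Az (hdvd : (∑ e ∈ E, e) % n = 0) (p : ℕ) : (n : ℤ) ∣ Az n E p := by
  unfold Az
  have h1 : (n : ℤ) ∣ ((∑ e ∈ E, e : ℕ) : ℤ) :=
    Int.natCast_dvd_natCast.mpr (Nat.dvd_of_mod_eq_zero hdvd)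
  have h2 : (n : ℤ) ∣ 2 * n * cnt n E p := ⟨2 * cnt n E p, by ring⟩
  have h3 : (n : ℤ) ∣ (n : ℤ) * p := ⟨p, rfl⟩
  have h4 : (n : ℤ) ∣ (n : ℤ) ^ 2 := ⟨n, by ring⟩
  exact dvd_sub (dvd_add h3 h4) (dvd_add h2 h1)

lemma step_bound (hn : 1 ≤ n) {a : ℤ} (hdvd : (n : ℤ) ∣ a) (h0 : a ≠ 0) :
    a ≤ -(n : ℤ) ∨ (n : ℤ) ≤ a := by
  rcases lt_trichotomy a 0 with h | h | h
  · left
    have : (n : ℤ) ≤ -a := Int.le_of_dvd (by omega) (dvd_neg.mpr hdvd)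
    omega
  · exact absurd h h0
  · right
    exact Int.le_of_dvd h hdvd

lemma sum_cnt_aux (N : ℕ) :
    (∑ i ∈ Finset.Icc 1 N, cnt n E i) + wsum n E N = (N + 1) * cnt n E N := by
  induction N with
  | zero => simp [cnt_zero, wsum_zero]
  | succ N ih =>
      rw [Finset.sum_Icc_succ_top (by omega : 1 ≤ N + 1), wsum_succ, cnt_succ]
      nlinarith [ih]

lemma gauss (N : ℕ) : 2 * (∑ i ∈ Finset.Icc 1 N, i) = N * (N + 1) := by
  induction N with
  | zero => simp
  | succ N ih =>
      rw [Finset.sum_Icc_succ_top (by omega : 1 ≤ N + 1)]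
      nlinarith [ih]

lemma sum_Az (hn : 1 ≤ n) (hE : E ⊆ Finset.Icc 1 (2 * n)) (hcard : E.card = n) :
    ∑ i ∈ Finset.Icc 1 (2 * n), Az n E i = -(n : ℤ) ^ 2 := by
  have hgN : 2 * (∑ i ∈ Finset.Icc 1 (2 * n), i) = 2 * (n * (2 * n + 1)) := by
    have := gauss (2 * n)
    linarith [this]
  have hgN' : (∑ i ∈ Finset.Icc 1 (2 * n), i) = n * (2 * n + 1) :=
    Nat.eq_of_mul_eq_mul_left (by omega) hgN
  have hgZ : (∑ i ∈ Finset.Icc 1 (2 * n), (i : ℤ)) = (n : ℤ) * (2 * n + 1) := by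
    have := congrArg (fun x : ℕ => (x : ℤ)) hgN'
    push_cast at this
    linarith
  have hcnt : (∑ i ∈ Finset.Icc 1 (2 * n), cnt n E i) + (∑ e ∈ E, e)
      = (2 * n + 1) * n := by
    have h := sum_cnt_aux (n := n) (E := E) (2 * n)
    rw [cnt_period hn hE, hcard, wsum_period hn hE] at h
    exact h
  have hcnt' : (∑ i ∈ Finset.Icc 1 (2 * n), (cnt n E i : ℤ)) + ((∑ e ∈ E, e : ℕ) : ℤ)
      = (2 * (n : ℤ) + 1) * n := by
    have := congrArg (fun x : ℕ => (x : ℤ)) hcnt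
    push_cast at this ⊢
    linarith
  unfold Az
  rw [Finset.sum_sub_distrib, Finset.sum_add_distrib, Finset.sum_add_distrib,
    Finset.sum_const, Finset.sum_const, Nat.card_Icc, ← Finset.mul_sum, ← Finset.mul_sum]
  simp only [nsmul_eq_mul]
  push_cast
  push_cast at hcnt'
  linear_combination (n : ℤ) * hgZ - 2 * (n : ℤ) * hcnt'

/-- the discrete IVT: there is a level point below `2n`. -/
lemma exists_level (hn : 1 ≤ n) (hE : E ⊆ Finset.Icc 1 (2 * n)) (hcard : E.card = n)
    (hdvd : (∑ e ∈ E, e) % n = 0) : ∃ p < 2 * n, level n E p := by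
  by_contra hno
  push_neg at hno
  have hc2n : cnt n E (2 * n) = n := by rw [cnt_period hn hE, hcard]
  have hA : Az n E (2 * n) = Az n E 0 := by
    unfold Az
    rw [hc2n, cnt_zero]
    push_cast
    ring
  have hno' : ∀ p ≤ 2 * n, Az n E p ≠ 0 := by
    intro p hp
    rcases Nat.lt_or_ge p (2 * n) with h | h
    · exact fun h0 => (hno p h) (level_iff_Az.mpr h0)
    · have hp2 : p = 2 * n := by omega
      subst hp2
      rw [hA]
      exact fun h0 => (hno 0 (by omega)) (level_iff_Az.mpr h0)
  have hn' : (1 : ℤ) ≤ (n : ℤ) := by exact_mod_cast hn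
  rcases lt_trichotomy (Az n E 0) 0 with hsgn | hsgn | hsgn
  · have hneg : ∀ p ≤ 2 * n, Az n E p ≤ -(n : ℤ) := by
      intro p hp
      induction p with
      | zero =>
          rcases step_bound hn (dvd_Az hdvd 0) (hno' 0 (by omega)) with h | h <;> omega
      | succ p ih =>
          have h1 := ih (by omega)
          have h2 := Az_succ (E := E) (n := n) p
          have h3 := per01 (E := E) (n := n) (p + 1)
          have hb := step_bound hn (dvd_Az hdvd (p + 1)) (hno' (p + 1) hp)
          rcases h3 with h | h <;> rw [h] at h2 <;> push_cast at h2 <;>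
            rcases hb with hb | hb <;> omega
    have hle : ∑ i ∈ Finset.Icc 1 (2 * n), Az n E i
        ≤ ∑ _i ∈ Finset.Icc 1 (2 * n), (-(n : ℤ)) := by
      apply Finset.sum_le_sum
      intro i hi
      exact hneg i (Finset.mem_Icc.mp hi).2
    rw [sum_Az hn hE hcard, Finset.sum_const, Nat.card_Icc] at hle
    simp only [nsmul_eq_mul] at hle
    push_cast at hle
    nlinarith [hle, hn']
  · exact hno' 0 (by omega) hsgn
  · have hpos : ∀ p ≤ 2 * n, (n : ℤ) ≤ Az n E p := by
      intro p hp
      induction p with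
      | zero =>
          rcases step_bound hn (dvd_Az hdvd 0) (hno' 0 (by omega)) with h | h <;> omega
      | succ p ih =>
          have h1 := ih (by omega)
          have h2 := Az_succ (E := E) (n := n) p
          have h3 := per01 (E := E) (n := n) (p + 1)
          have hb := step_bound hn (dvd_Az hdvd (p + 1)) (hno' (p + 1) hp)
          rcases h3 with h | h <;> rw [h] at h2 <;> push_cast at h2 <;>
            rcases hb with hb | hb <;> omega
    have hle : ∑ _i ∈ Finset.Icc 1 (2 * n), (n : ℤ)
        ≤ ∑ i ∈ Finset.Icc 1 (2 * n), Az n E i := by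
      apply Finset.sum_le_sum
      intro i hi
      exact hpos i (Finset.mem_Icc.mp hi).2
    rw [sum_Az hn hE hcard, Finset.sum_const, Nat.card_Icc] at hle
    simp only [nsmul_eq_mul] at hle
    push_cast at hle
    nlinarith [hle, hn']

end IVT

section Valid
variable {n : ℕ} {E : Finset ℕ}

instance levelDecidable (n : ℕ) (E : Finset ℕ) (p : ℕ) : Decidable (level n E p) := by
  unfold level; infer_instance

/-- `p` is a valid starting point for `E`. -/
def valid (n : ℕ) (E : Finset ℕ) (p : ℕ) : Prop :=
  p < 2 * n ∧ level n E p ∧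
  (∀ k, 0 < k → k < n → level n E (p + 2 * k) → Wz n E p ≤ Wz n E (p + 2 * k)) ∧
  2 * n ≤ p + 2 * sInf {k | 0 < k ∧ level n E (p + 2 * k) ∧ Wz n E (p + 2 * k) = Wz n E p}

lemma dom1 (hn : 1 ≤ n) (hE : E ⊆ Finset.Icc 1 (2 * n)) (hcard : E.card = n)
    {p : ℕ} (hp : p < 2 * n) (hlev : level n E p)
    (hret : ∀ k, 0 < k → k < n → level n E (p + 2 * k) → Wz n E p ≤ Wz n E (p + 2 * k))
    {x : ℕ} (hlevx : level n E x) (hpx : p < x) (hx2 : x ≤ p + 2 * n) :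
    Wz n E p ≤ Wz n E x := by
  obtain ⟨hdiff, hcle⟩ := level_even_diff hn (le_of_lt hpx) hlev hlevx
  set k := cnt n E x - cnt n E p with hk
  have hxeq : x = p + 2 * k := by omega
  have hk0 : 0 < k := by omega
  have hkn : k ≤ n := by omega
  rcases Nat.lt_or_ge k n with h | h
  · rw [hxeq]
    exact hret k hk0 h (by rw [← hxeq]; exact hlevx)
  · have : k = n := by omega
    rw [hxeq, this]
    rw [show p + 2 * n = p + 2 * n from rfl]
    exact le_of_eq (Wz_add_period hn hE hcard hlev).symm

lemma valid_unique (hn : 1 ≤ n) (hE : E ⊆ Finset.Icc 1 (2 * n)) (hcard : E.card = n)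
    {p p' : ℕ} (h : valid n E p) (h' : valid n E p') : p = p' := by
  have aux : ∀ q q' : ℕ, valid n E q → valid n E q' → q < q' → False := by
    intro q q' hq hq' hlt
    obtain ⟨hq2n, hqlev, hqret, hqinf⟩ := hq
    obtain ⟨hq'2n, hq'lev, hq'ret, _⟩ := hq'
    have h1 : Wz n E q ≤ Wz n E q' :=
      dom1 hn hE hcard hq2n hqlev hqret hq'lev hlt (by omega)
    have h2 : Wz n E q' ≤ Wz n E (q + 2 * n) :=
      dom1 hn hE hcard hq'2n hq'lev hq'ret
        ((level_add_period hn hE hcard q).mpr hqlev) (by omega) (by omega)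
    have h3 : Wz n E (q + 2 * n) = Wz n E q := Wz_add_period hn hE hcard hqlev
    have hWeq : Wz n E q' = Wz n E q := le_antisymm (by omega) h1
    obtain ⟨hdiff, hcle⟩ := level_even_diff hn (le_of_lt hlt) hqlev hq'lev
    set c := cnt n E q' - cnt n E q with hc
    have hc0 : 0 < c := by omega
    have hq'eq : q' = q + 2 * c := by omega
    have hcS : c ∈ {k | 0 < k ∧ level n E (q + 2 * k) ∧ Wz n E (q + 2 * k) = Wz n E q} :=
      ⟨hc0, by rw [← hq'eq]; exact hq'lev, by rw [← hq'eq]; exact hWeq⟩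
    have := Nat.sInf_le hcS
    omega
  rcases lt_trichotomy p p' with hlt | heq | hgt
  · exact absurd (aux p p' h h' hlt) (fun h => h)
  · exact heq
  · exact absurd (aux p' p h' h hgt) (fun h => h)

lemma valid_exists (hn : 1 ≤ n) (hE : E ⊆ Finset.Icc 1 (2 * n)) (hcard : E.card = n)
    (hdvd : (∑ e ∈ E, e) % n = 0) : ∃ p, valid n E p := by
  obtain ⟨pl, hpl, hlevpl⟩ := exists_level hn hE hcard hdvd
  set T0 := (Finset.range (2 * n)).filter (fun p => level n E p) with hT0
  have hT0ne : T0.Nonempty :=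
    ⟨pl, by rw [hT0, Finset.mem_filter, Finset.mem_range]; exact ⟨hpl, hlevpl⟩⟩
  obtain ⟨p₀, hp₀T, hp₀min⟩ := T0.exists_min_image (fun p => Wz n E p) hT0ne
  set P := T0.filter (fun p => Wz n E p = Wz n E p₀) with hP
  have hPne : P.Nonempty := ⟨p₀, by rw [hP, Finset.mem_filter]; exact ⟨hp₀T, rfl⟩⟩
  set q := P.max' hPne with hq
  have hqP : q ∈ P := P.max'_mem hPne
  rw [hP, Finset.mem_filter, hT0, Finset.mem_filter, Finset.mem_range] at hqP
  obtain ⟨⟨hq2n, hqlev⟩, hqW⟩ := hqP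
  -- global dominance below 4n
  have domlow : ∀ x, x < 4 * n → level n E x → Wz n E p₀ ≤ Wz n E x := by
    intro x hx hlevx
    rcases Nat.lt_or_ge x (2 * n) with h | h
    · exact hp₀min x (by rw [hT0, Finset.mem_filter, Finset.mem_range]; exact ⟨h, hlevx⟩)
    · set y := x - 2 * n with hy
      have hxy : x = y + 2 * n := by omega
      have hlevy : level n E y := by
        rw [hxy] at hlevx
        exact (level_add_period hn hE hcard y).mp hlevx
      have : Wz n E x = Wz n E y := by rw [hxy]; exact Wz_add_period hn hE hcard hlevy
      rw [this]
      have hyT : y ∈ T0 := by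
        rw [hT0, Finset.mem_filter, Finset.mem_range]
        exact ⟨by omega, hlevy⟩
      exact hp₀min y hyT
  have hret : ∀ k, 0 < k → k < n → level n E (q + 2 * k) → Wz n E q ≤ Wz n E (q + 2 * k) := by
    intro k hk0 hkn hlevk
    rw [hqW]
    exact domlow (q + 2 * k) (by omega) hlevk
  -- the sInf condition
  set S := {k | 0 < k ∧ level n E (q + 2 * k) ∧ Wz n E (q + 2 * k) = Wz n E q} with hS
  have hnS : n ∈ S := by
    refine ⟨hn, (level_add_period hn hE hcard q).mpr hqlev, Wz_add_period hn hE hcard hqlev⟩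
  have hinf_mem : sInf S ∈ S := Nat.sInf_mem ⟨n, hnS⟩
  have hinf_le : sInf S ≤ n := Nat.sInf_le hnS
  have hfinal : 2 * n ≤ q + 2 * sInf S := by
    by_contra hcon
    push_neg at hcon
    set x := q + 2 * sInf S with hx
    have hxP : x ∈ P := by
      rw [hP, Finset.mem_filter, hT0, Finset.mem_filter, Finset.mem_range]
      exact ⟨⟨by omega, hinf_mem.2.1⟩, by rw [hinf_mem.2.2, hqW]⟩
    have := P.le_max' x hxP
    rw [← hq] at this
    have hSpos := hinf_mem.1
    omega
  exact ⟨q, hq2n, hqlev, hret, hfinal⟩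

end Valid

section Bij
variable {n : ℕ} {E D : Finset ℕ}

lemma bridge_unfold (hD : D ∈ scoreBridges n) :
    D ⊆ Finset.Icc 1 (2 * n) ∧ D.card = n ∧ (∑ d ∈ D, d) = n ^ 2 := by
  rw [scoreBridges, Finset.mem_filter, Finset.mem_powersetCard] at hD
  exact ⟨hD.1.1, hD.1.2, hD.2.1⟩

lemma firstIrr_spec (hn : 1 ≤ n) (hD : D ∈ scoreBridges n) :
    0 < firstIrr D ∧ firstIrr D ≤ n ∧
    (D ∩ Finset.Icc 1 (2 * firstIrr D)).card = firstIrr D ∧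
    (∑ d ∈ D ∩ Finset.Icc 1 (2 * firstIrr D), d) = (firstIrr D) ^ 2 := by
  obtain ⟨hsub, hcard, hsum⟩ := bridge_unfold hD
  have hfull : D ∩ Finset.Icc 1 (2 * n) = D := Finset.inter_eq_left.mpr hsub
  have hnS : n ∈ {k | 0 < k ∧ (D ∩ Finset.Icc 1 (2 * k)).card = k ∧
      (∑ d ∈ D ∩ Finset.Icc 1 (2 * k), d) = k ^ 2} := by
    refine ⟨hn, ?_, ?_⟩
    · rw [hfull, hcard]
    · rw [hfull, hsum]
  have hmem := Nat.sInf_mem (⟨n, hnS⟩ : Set.Nonempty _)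
  have hle := Nat.sInf_le hnS
  exact ⟨hmem.1, hle, hmem.2.1, hmem.2.2⟩

lemma not_mem_rot_top (hn : 1 ≤ n) (hD : D ⊆ Finset.Icc 1 (2 * n)) {v : ℕ} (hv : v < 2 * n)
    (hu : 2 * n - v ∉ D) : 2 * n ∉ rot n v D := by
  intro hmem
  simp only [rot, Finset.mem_image] at hmem
  obtain ⟨d, hd, hfd⟩ := hmem
  have hb := Finset.mem_Icc.mp (hD hd)
  split at hfd
  · have : d = 2 * n - v := by omega
    rw [← this] at hu
    exact hu hd
  · omega

/-- forward map is well defined -/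
lemma phi_mem (hn : 1 ≤ n) (hD : D ∈ scoreBridges n) {u : ℕ}
    (hu : u ∈ Finset.Icc 1 (2 * firstIrr D) \ D) :
    rot n (2 * n - u) D ∈
      ((Finset.Icc 1 (2 * n - 1)).powersetCard n).filter
        (fun A => (∑ d ∈ A, d) % n = 0) := by
  obtain ⟨hsub, hcard, hsum⟩ := bridge_unfold hD
  obtain ⟨h0, hlen, -, -⟩ := firstIrr_spec hn hD
  rw [Finset.mem_sdiff, Finset.mem_Icc] at hu
  obtain ⟨⟨hu1, hu2⟩, hunot⟩ := hu
  have hu2n : u ≤ 2 * n := by omega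
  have hvlt : 2 * n - u < 2 * n := by omega
  have hnotop : 2 * n ∉ rot n (2 * n - u) D := by
    apply not_mem_rot_top hn hsub hvlt
    rw [show 2 * n - (2 * n - u) = u by omega]
    exact hunot
  rw [Finset.mem_filter, Finset.mem_powersetCard]
  refine ⟨⟨?_, ?_⟩, ?_⟩
  · intro e he
    have h1 := rot_subset hsub (by omega : 2 * n - u ≤ 2 * n) he
    rw [Finset.mem_Icc] at h1 ⊢
    have : e ≠ 2 * n := fun h => hnotop (h ▸ he)
    omega
  · rw [rot_card hsub (by omega), hcard]
  · rw [rot_sum_mod hn hsub (by omega) hcard, hsum]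
    have : n ^ 2 = n * n := sq n
    rw [this, Nat.mul_mod_right]

/-- from membership data to validity of the corresponding start -/
lemma valid_of_mem (hn : 1 ≤ n) (hE : E ⊆ Finset.Icc 1 (2 * n)) (hcard : E.card = n)
    {u : ℕ} (hu1 : 1 ≤ u) (hu2 : u ≤ 2 * n)
    (hbr : rot n u E ∈ scoreBridges n)
    (hfi : u ≤ 2 * firstIrr (rot n u E)) : valid n E (2 * n - u) := by
  obtain ⟨hlev, hret⟩ := (bridge_iff hn hE hcard hu1 hu2).mp hbr
  refine ⟨by omega, hlev, ?_, ?_⟩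
  · intro k hk0 hkn hlevk
    exact hret k hk0 hkn hlevk
  · rw [firstIrr_rot hn hE hcard hu1 hu2 hlev] at hfi
    omega

/-- validity gives membership data -/
lemma mem_of_valid (hn : 1 ≤ n) (hE : E ⊆ Finset.Icc 1 (2 * n - 1)) (hcard : E.card = n)
    {p : ℕ} (hval : valid n E p) :
    rot n (2 * n - p) E ∈ scoreBridges n ∧
    (2 * n - p) ∈ Finset.Icc 1 (2 * firstIrr (rot n (2 * n - p) E)) \ (rot n (2 * n - p) E) := by
  have hE2 : E ⊆ Finset.Icc 1 (2 * n) := by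
    intro e he
    have := Finset.mem_Icc.mp (hE he)
    rw [Finset.mem_Icc]
    omega
  obtain ⟨hp2n, hlev, hret, hinf⟩ := hval
  set u := 2 * n - p with hu
  have hu1 : 1 ≤ u := by omega
  have hu2 : u ≤ 2 * n := by omega
  have hpu : 2 * n - u = p := by omega
  have hbr : rot n u E ∈ scoreBridges n := by
    rw [bridge_iff hn hE2 hcard hu1 hu2, hpu]
    exact ⟨hlev, hret⟩
  have hfi : firstIrr (rot n u E) = sInf {k | 0 < k ∧ level n E (2 * n - u + 2 * k) ∧
      Wz n E (2 * n - u + 2 * k) = Wz n E (2 * n - u)} :=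
    firstIrr_rot hn hE2 hcard hu1 hu2 (by rw [hpu]; exact hlev)
  rw [hpu] at hfi
  refine ⟨hbr, ?_⟩
  rw [Finset.mem_sdiff, Finset.mem_Icc]
  refine ⟨⟨hu1, by rw [hfi]; omega⟩, ?_⟩
  -- u ∉ rot n u E
  intro hmem
  have := (mem_rot hn hE2 hu1 hu2 hu1 hu2).mp hmem
  unfold per at this
  rw [show 2 * n - u + u - 1 = 2 * n - 1 by omega,
    Nat.mod_eq_of_lt (by omega : 2 * n - 1 < 2 * n),
    show 2 * n - 1 + 1 = 2 * n by omega] at this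
  split at this
  · next hc =>
      have := Finset.mem_Icc.mp (hE hc)
      omega
  · omega

/-- the central bijection -/
lemma card_bij_main (hn : 1 ≤ n) :
    ((scoreBridges n).sigma (fun D => (Finset.Icc 1 (2 * firstIrr D)) \ D)).card
      = (((Finset.Icc 1 (2 * n - 1)).powersetCard n).filter
          (fun A => (∑ d ∈ A, d) % n = 0)).card := by
  apply Finset.card_bij (fun x _ => rot n (2 * n - x.2) x.1)
  · rintro ⟨D, u⟩ hx
    rw [Finset.mem_sigma] at hx
    exact phi_mem hn hx.1 hx.2
  · rintro ⟨D, u⟩ hx ⟨D', u'⟩ hx' heq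
    rw [Finset.mem_sigma] at hx hx'
    dsimp only at hx hx' heq ⊢
    obtain ⟨hD, hu⟩ := hx
    obtain ⟨hD', hu'⟩ := hx'
    obtain ⟨hDsub, hDcard, -⟩ := bridge_unfold hD
    obtain ⟨hD'sub, hD'card, -⟩ := bridge_unfold hD'
    rw [Finset.mem_sdiff, Finset.mem_Icc] at hu hu'
    have hfl := (firstIrr_spec hn hD).2.1
    have hfl' := (firstIrr_spec hn hD').2.1
    have hu2 : u ≤ 2 * n := by omega
    have hu'2 : u' ≤ 2 * n := by omega
    set E := rot n (2 * n - u) D with hEdef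
    have hE2 : E ⊆ Finset.Icc 1 (2 * n) := rot_subset hDsub (by omega)
    have hEcard : E.card = n := by rw [hEdef, rot_card hDsub (by omega), hDcard]
    have hDrec : rot n u E = D := rot_rot hDsub (by omega)
    have hD'rec : rot n u' E = D' := by
      rw [heq]; exact rot_rot hD'sub (by omega)
    have hval : valid n E (2 * n - u) := by
      apply valid_of_mem hn hE2 hEcard hu.1.1 hu2 (by rw [hDrec]; exact hD)
      rw [hDrec]; omega
    have hval' : valid n E (2 * n - u') := by
      apply valid_of_mem hn hE2 hEcard hu'.1.1 hu'2 (by rw [hD'rec]; exact hD')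
      rw [hD'rec]; omega
    have := valid_unique hn hE2 hEcard hval hval'
    have huu : u = u' := by omega
    subst huu
    have hDD : D = D' := by rw [← hDrec, ← hD'rec]
    subst hDD
    rfl
  · intro A hA
    rw [Finset.mem_filter, Finset.mem_powersetCard] at hA
    obtain ⟨⟨hAsub, hAcard⟩, hAdvd⟩ := hA
    have hA2 : A ⊆ Finset.Icc 1 (2 * n) := by
      intro e he
      have := Finset.mem_Icc.mp (hAsub he)
      rw [Finset.mem_Icc]
      omega
    obtain ⟨p, hval⟩ := valid_exists hn hA2 hAcard hAdvd
    obtain ⟨hbr, hmem⟩ := mem_of_valid hn hAsub hAcard hval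
    refine ⟨⟨rot n (2 * n - p) A, 2 * n - p⟩, ?_, ?_⟩
    · rw [Finset.mem_sigma]
      exact ⟨hbr, hmem⟩
    · show rot n (2 * n - (2 * n - p)) (rot n (2 * n - p) A) = A
      have hp2n : p < 2 * n := hval.1
      rw [show 2 * n - (2 * n - p) = p by omega]
      exact rot_rot hA2 (by omega)

end Bij

section Strong
variable {n : ℕ}

/-- the bridge associated with a score sequence. -/
def stb (n : ℕ) (s : Fin n → ℕ) : Finset ℕ :=
  Finset.image (fun i : Fin n => s i + i + 1) Finset.univ

lemma stb_strictMono {s : Fin n → ℕ} (hs : Monotone s) :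
    StrictMono (fun i : Fin n => s i + i + 1) := by
  intro i j hij
  have h1 : s i ≤ s j := hs (le_of_lt hij)
  have h2 : (i : ℕ) < j := hij
  show s i + i + 1 < s j + j + 1
  omega

lemma stb_card {s : Fin n → ℕ} (hs : Monotone s) : (stb n s).card = n := by
  unfold stb
  rw [Finset.card_image_of_injective _ (stb_strictMono hs).injective, Finset.card_univ,
    Fintype.card_fin]

/-- a down-closed subset of `Fin n` is an initial segment. -/
lemma lower_set_eq {A : Finset (Fin n)} (hlow : ∀ i j : Fin n, i ≤ j → j ∈ A → i ∈ A)
    (i : Fin n) : i ∈ A ↔ (i : ℕ) < A.card := by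
  constructor
  · intro hi
    have hsub : Finset.Iic i ⊆ A := fun j hj => hlow j i (Finset.mem_Iic.mp hj) hi
    have := Finset.card_le_card hsub
    rw [Fin.card_Iic] at this
    omega
  · intro hi
    by_contra hno
    have hsub : A ⊆ Finset.Iio i := by
      intro j hj
      rw [Finset.mem_Iio]
      by_contra hji
      push_neg at hji
      exact hno (hlow i j hji hj)
    have := Finset.card_le_card hsub
    rw [Fin.card_Iio] at this
    omega

/-- sums over the initial segment of `Fin n`. -/
lemma sum_initial (hn : 1 ≤ n) {k : ℕ} (hk : k ≤ n) (g : ℕ → ℕ) :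
    ∑ i ∈ Finset.univ.filter (fun i : Fin n => (i : ℕ) < k), g (i : ℕ)
      = ∑ j ∈ Finset.range k, g j := by
  apply Finset.sum_nbij' (fun i : Fin n => (i : ℕ))
      (fun j : ℕ => if h : j < n then (⟨j, h⟩ : Fin n) else ⟨0, by omega⟩)
  · intro a ha
    rw [Finset.mem_filter] at ha
    rw [Finset.mem_range]
    exact ha.2
  · intro j hj
    rw [Finset.mem_range] at hj
    rw [Finset.mem_filter, dif_pos (by omega : j < n)]
    exact ⟨Finset.mem_univ _, hj⟩
  · intro a ha
    simp [a.isLt]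
  · intro j hj
    rw [Finset.mem_range] at hj
    rw [dif_pos (by omega : j < n)]
  · intro a ha
    rfl

lemma card_initial (hn : 1 ≤ n) {k : ℕ} (hk : k ≤ n) :
    (Finset.univ.filter (fun i : Fin n => (i : ℕ) < k)).card = k := by
  have := sum_initial (n := n) hn hk (fun _ => 1)
  simpa using this

lemma two_choose_two (k : ℕ) : 2 * Nat.choose k 2 = k * (k - 1) := by
  rcases Nat.eq_zero_or_pos k with h | h
  · simp [h]
  · rw [Nat.choose_two_right]
    have heven : 2 ∣ k * (k - 1) := by
      rcases Nat.even_or_odd k with he | ho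
      · exact Dvd.dvd.mul_right he.two_dvd _
      · have : Even (k - 1) := by
          rcases ho with ⟨m, hm⟩
          exact ⟨m, by omega⟩
        exact Dvd.dvd.mul_left this.two_dvd _
    omega

/-- the window of the associated bridge. -/
lemma stb_window {s : Fin n → ℕ} (hs : Monotone s) {k : ℕ} (hk : k ≤ n)
    (hcardk : ((stb n s) ∩ Finset.Icc 1 (2 * k)).card = k) :
    (stb n s) ∩ Finset.Icc 1 (2 * k)
      = (Finset.univ.filter (fun i : Fin n => (i : ℕ) < k)).image
          (fun i : Fin n => s i + i + 1) := by
  have hmono := stb_strictMono hs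
  set f := fun i : Fin n => s i + i + 1 with hf
  set A := Finset.univ.filter (fun i : Fin n => f i ≤ 2 * k) with hA
  have hstbi : ∀ i : Fin n, f i ∈ stb n s := by
    intro i
    exact Finset.mem_image_of_mem _ (Finset.mem_univ i)
  have hf1 : ∀ i : Fin n, 1 ≤ f i ∧ f i = s i + i + 1 := by
    intro i
    exact ⟨by simp only [hf]; omega, rfl⟩
  have hwin : (stb n s) ∩ Finset.Icc 1 (2 * k) = A.image f := by
    ext e
    constructor
    · intro he
      rw [Finset.mem_inter] at he
      obtain ⟨he1, he2⟩ := he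
      rw [stb, Finset.mem_image] at he1
      obtain ⟨i, -, rfl⟩ := he1
      rw [Finset.mem_image]
      refine ⟨i, ?_, rfl⟩
      rw [hA, Finset.mem_filter]
      exact ⟨Finset.mem_univ _, (Finset.mem_Icc.mp he2).2⟩
    · intro he
      rw [Finset.mem_image] at he
      obtain ⟨i, hiA, rfl⟩ := he
      rw [hA, Finset.mem_filter] at hiA
      rw [Finset.mem_inter, Finset.mem_Icc]
      exact ⟨hstbi i, (hf1 i).1, hiA.2⟩
  have hAcard : A.card = k := by
    rw [hwin] at hcardk
    rw [← Finset.card_image_of_injective A hmono.injective, hcardk]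
  have hlow : ∀ i j : Fin n, i ≤ j → j ∈ A → i ∈ A := by
    intro i j hij hj
    rw [hA, Finset.mem_filter] at hj ⊢
    refine ⟨Finset.mem_univ _, ?_⟩
    have h1 : s i ≤ s j := hs hij
    have h2 : (i : ℕ) ≤ j := hij
    have := hj.2
    simp only [hf] at this ⊢
    omega
  have hiff : ∀ i : Fin n, i ∈ A ↔ (i : ℕ) < k := by
    intro i
    rw [lower_set_eq hlow i, hAcard]
  have hAeq : A = Finset.univ.filter (fun i : Fin n => (i : ℕ) < k) := by
    ext i
    rw [hiff i, Finset.mem_filter]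
    exact ⟨fun h => ⟨Finset.mem_univ _, h⟩, fun h => h.2⟩
  rw [hwin, hAeq]

lemma stb_mem (hn : 1 ≤ n) {s : Fin n → ℕ} (hstrong : IsStrongScoreSeq n s) :
    stb n s ∈ scoreBridges n ∧ firstIrr (stb n s) = n := by
  obtain ⟨⟨hmono, hbd, hsum, hpart⟩, hstrict⟩ := hstrong
  have hmonoF := stb_strictMono hmono
  set f := fun i : Fin n => s i + i + 1 with hf
  have hsumD : ∀ k : ℕ, k ≤ n →
      ((stb n s) ∩ Finset.Icc 1 (2 * k)).card = k →
      2 * (∑ d ∈ (stb n s) ∩ Finset.Icc 1 (2 * k), d)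
        = 2 * scorePartial n s k + k * (k - 1) + 2 * k := by
    intro k hk hcardk
    rw [stb_window hmono hk hcardk, Finset.sum_image (fun a _ b _ h => hmonoF.injective h)]
    unfold scorePartial
    have hsplit : ∑ i ∈ Finset.univ.filter (fun i : Fin n => (i : ℕ) < k), f i
        = (∑ i ∈ Finset.univ.filter (fun i : Fin n => (i : ℕ) < k), s i)
          + (∑ i ∈ Finset.univ.filter (fun i : Fin n => (i : ℕ) < k), (i : ℕ))
          + (Finset.univ.filter (fun i : Fin n => (i : ℕ) < k)).card := by
      rw [Finset.sum_add_distrib, Finset.sum_add_distrib, Finset.sum_const, smul_eq_mul, mul_one]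
    rw [hsplit, card_initial hn hk]
    have hid : ∑ i ∈ Finset.univ.filter (fun i : Fin n => (i : ℕ) < k), (i : ℕ)
        = ∑ j ∈ Finset.range k, j := sum_initial hn hk id
    rw [hid]
    have := Finset.sum_range_id_mul_two k
    omega
  -- total sum
  have hfull : (stb n s) ∩ Finset.Icc 1 (2 * n) = stb n s := by
    apply Finset.inter_eq_left.mpr
    intro e he
    simp only [stb, Finset.mem_image] at he
    obtain ⟨i, -, rfl⟩ := he
    have h1 := hbd i
    have h2 : (i : ℕ) < n := i.2
    rw [Finset.mem_Icc]
    omega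
  have hcardn : ((stb n s) ∩ Finset.Icc 1 (2 * n)).card = n := by
    rw [hfull, stb_card hmono]
  have h2sumn := hsumD n (le_refl n) hcardn
  rw [hfull] at h2sumn
  have hsp : scorePartial n s n = Nat.choose n 2 := by
    unfold scorePartial
    have hflt : Finset.univ.filter (fun i : Fin n => (i : ℕ) < n) = Finset.univ :=
      Finset.filter_true_of_mem (fun i _ => i.2)
    rw [hflt, hsum]
  have hchoose := two_choose_two n
  have hmuln : n * (n - 1) + n = n * n := by
    rw [← Nat.mul_succ]
    congr 1
    omega
  have hsumtot : (∑ d ∈ stb n s, d) = n ^ 2 := by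
    have hn2 : n ^ 2 = n * n := sq n
    omega
  -- strict inequality at proper returns
  have hstrictD : ∀ k : ℕ, 0 < k → k < n →
      ((stb n s) ∩ Finset.Icc 1 (2 * k)).card = k →
      k ^ 2 < ∑ d ∈ (stb n s) ∩ Finset.Icc 1 (2 * k), d := by
    intro k hk0 hkn hcardk
    have h2s := hsumD k (le_of_lt hkn) hcardk
    have hsc := hstrict k hk0 hkn
    have hck := two_choose_two k
    have hk2 : k ^ 2 = k * k := sq k
    have hmulk : k * (k - 1) + k = k * k := by
      rw [← Nat.mul_succ]
      congr 1
      omega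
    omega
  have hmem : stb n s ∈ scoreBridges n := by
    rw [scoreBridges, Finset.mem_filter, Finset.mem_powersetCard]
    refine ⟨⟨?_, stb_card hmono⟩, hsumtot, ?_⟩
    · intro e he
      simp only [stb, Finset.mem_image] at he
      obtain ⟨i, -, rfl⟩ := he
      have h1 := hbd i
      have h2 : (i : ℕ) < n := i.2
      rw [Finset.mem_Icc]
      omega
    · intro k hk hcardk
      obtain ⟨hk0, hkn⟩ := Finset.mem_Ioo.mp hk
      exact le_of_lt (hstrictD k hk0 hkn hcardk)
  refine ⟨hmem, ?_⟩
  -- firstIrr = n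
  have hnS : n ∈ {k | 0 < k ∧ ((stb n s) ∩ Finset.Icc 1 (2 * k)).card = k ∧
      (∑ d ∈ (stb n s) ∩ Finset.Icc 1 (2 * k), d) = k ^ 2} :=
    ⟨hn, hcardn, by rw [hfull]; exact hsumtot⟩
  have hfieq : firstIrr (stb n s) = sInf {k | 0 < k ∧
      ((stb n s) ∩ Finset.Icc 1 (2 * k)).card = k ∧
      (∑ d ∈ (stb n s) ∩ Finset.Icc 1 (2 * k), d) = k ^ 2} := rfl
  rw [hfieq]
  have hle := Nat.sInf_le hnS
  have hmemInf := Nat.sInf_mem (⟨n, hnS⟩ : Set.Nonempty _)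
  rcases Nat.lt_or_ge (sInf {k | 0 < k ∧ ((stb n s) ∩ Finset.Icc 1 (2 * k)).card = k ∧
      (∑ d ∈ (stb n s) ∩ Finset.Icc 1 (2 * k), d) = k ^ 2}) n with h | h
  · exfalso
    have hcontr := hstrictD _ hmemInf.1 h hmemInf.2.1
    have heqq := hmemInf.2.2
    omega
  · omega

lemma stb_injective (hn : 1 ≤ n) {s s' : Fin n → ℕ}
    (hs : Monotone s) (hs' : Monotone s') (heq : stb n s = stb n s') : s = s' := by
  have hcard : (stb n s).card = n := stb_card hs
  have h1 : (fun i : Fin n => s i + i + 1) = (stb n s).orderEmbOfFin hcard :=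
    Finset.orderEmbOfFin_unique hcard
      (fun i => Finset.mem_image_of_mem _ (Finset.mem_univ i)) (stb_strictMono hs)
  have h2 : (fun i : Fin n => s' i + i + 1) = (stb n s).orderEmbOfFin hcard := by
    apply Finset.orderEmbOfFin_unique hcard
    · intro i
      rw [heq]
      exact Finset.mem_image_of_mem _ (Finset.mem_univ i)
    · exact stb_strictMono hs'
  funext i
  have := congrFun (h1.trans h2.symm) i
  omega

end Strong
end EGZaux

open EGZaux in
/-- `Nₙ = ∑_B ℓ(B)` over score-sequence bridges `B` of length `2n`; since each
strong score sequence contributes `ℓ = n`, we get `Nₙ ≥ n·Qₙ`. -/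
theorem EGZ_number_eq_sum_firstIrr (n : ℕ) (hn : 1 ≤ n) :
    N n = ∑ D ∈ scoreBridges n, firstIrr D ∧ n * Q n ≤ N n := by
  classical
  -- Part 1 : N n = ∑ firstIrr
  have hNF : N n = (((Finset.Icc 1 (2 * n - 1)).powersetCard n).filter
      (fun A => (∑ d ∈ A, d) % n = 0)).card := by
    have h1 : N n = Set.ncard {D : Finset ℕ | D ⊆ Finset.Icc 1 (2 * n - 1) ∧ D.card = n ∧
        (∑ d ∈ D, d) % n = 0} := by
      rw [N]
      exact Nat.card_coe_set_eq _
    have hset : {D : Finset ℕ | D ⊆ Finset.Icc 1 (2 * n - 1) ∧ D.card = n ∧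
        (∑ d ∈ D, d) % n = 0} = ↑(((Finset.Icc 1 (2 * n - 1)).powersetCard n).filter
          (fun A => (∑ d ∈ A, d) % n = 0)) := by
      ext D
      simp only [Set.mem_setOf_eq, Finset.coe_filter, Finset.mem_powersetCard]
      tauto
    rw [h1, hset, Set.ncard_coe_finset]
  have hslice : ∀ D ∈ scoreBridges n,
      ((Finset.Icc 1 (2 * firstIrr D)) \ D).card = firstIrr D := by
    intro D hD
    obtain ⟨hpos, hlen, hcard, -⟩ := firstIrr_spec hn hD
    have h1 := Finset.card_sdiff_add_card_inter (Finset.Icc 1 (2 * firstIrr D)) D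
    rw [Finset.inter_comm, hcard, Nat.card_Icc] at h1
    omega
  have part1 : N n = ∑ D ∈ scoreBridges n, firstIrr D := by
    rw [hNF, ← card_bij_main hn, Finset.card_sigma]
    exact Finset.sum_congr rfl hslice
  -- Part 2 : n * Q n ≤ N n
  have hQP : Q n ≤ ((scoreBridges n).filter (fun D => firstIrr D = n)).card := by
    set f : {s : Fin n → ℕ // IsStrongScoreSeq n s} →
        {D : Finset ℕ // D ∈ (scoreBridges n).filter (fun D => firstIrr D = n)} :=
      fun x => ⟨stb n x.1, by
        rw [Finset.mem_filter]
        exact stb_mem hn x.2⟩ with hfdef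
    have hinj : Function.Injective f := by
      rintro ⟨s, hs⟩ ⟨s', hs'⟩ h
      have heq : stb n s = stb n s' := congrArg Subtype.val h
      exact Subtype.ext (stb_injective hn hs.1.1 hs'.1.1 heq)
    calc Q n = Nat.card {s : Fin n → ℕ // IsStrongScoreSeq n s} := rfl
      _ ≤ Nat.card {D : Finset ℕ // D ∈ (scoreBridges n).filter (fun D => firstIrr D = n)} :=
        Nat.card_le_card_of_injective f hinj
      _ = ((scoreBridges n).filter (fun D => firstIrr D = n)).card := by
        rw [Nat.card_eq_fintype_card, Fintype.card_coe]
  have hsum2 : n * ((scoreBridges n).filter (fun D => firstIrr D = n)).card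
      ≤ ∑ D ∈ scoreBridges n, firstIrr D := by
    have h1 : ∑ D ∈ (scoreBridges n).filter (fun D => firstIrr D = n), firstIrr D
        = ((scoreBridges n).filter (fun D => firstIrr D = n)).card * n := by
      rw [Finset.sum_congr rfl (fun D hD => (Finset.mem_filter.mp hD).2), Finset.sum_const,
        smul_eq_mul]
    calc n * ((scoreBridges n).filter (fun D => firstIrr D = n)).card
        = ∑ D ∈ (scoreBridges n).filter (fun D => firstIrr D = n), firstIrr D := by
          rw [h1, mul_comm]
      _ ≤ ∑ D ∈ scoreBridges n, firstIrr D :=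
          Finset.sum_le_sum_of_subset (Finset.filter_subset _ _)
  refine ⟨part1, ?_⟩
  calc n * Q n ≤ n * ((scoreBridges n).filter (fun D => firstIrr D = n)).card :=
        Nat.mul_le_mul_left n hQP
    _ ≤ ∑ D ∈ scoreBridges n, firstIrr D := hsum2
    _ = N n := part1.symm
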